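/- arXiv:1911.11604 — 3 statements merged into one kernel-verified Lean document; each statement's English description precedes it below -/
import Mathlib

section
/- Let u ∈ E be differentially transcendental over F and let P, Q ∈ F{u} be nonzero coprime differential polynomials with m := max(ord P, ord Q) ≥ 0. Then Q(u) ≠ 0 and for every integer s ≥ 1 there exists P_s ∈ F{u} such that ord(P_s) = m+s, P_s has degree exactly 1 in the variable u_{m+s}, and D^s(P(u)/Q(u)) = P_s(u)/Q(u)^{s+1} holds in E. -/
open MvPolynomial

noncomputable section


set_option synthInstance.maxHeartbeats 1000000
set_option maxHeartbeats 1000000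

namespace DFAux
open MvPolynomial

variable {F : Type*} [Field F]

noncomputable def d0lin (δF : Derivation ℤ F F) :
    MvPolynomial ℕ F →ₗ[ℤ] MvPolynomial ℕ F where
  toFun p := AddMonoidAlgebra.ofCoeff (Finsupp.mapRange.linearMap (δF : F →ₗ[ℤ] F) (AddMonoidAlgebra.coeff p))
  map_add' p q := by
    show AddMonoidAlgebra.ofCoeff (Finsupp.mapRange.linearMap (δF : F →ₗ[ℤ] F)
      (AddMonoidAlgebra.coeff p + AddMonoidAlgebra.coeff q)) = _
    rw [map_add]; rfl
  map_smul' c p := by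
    show AddMonoidAlgebra.ofCoeff (Finsupp.mapRange.linearMap (δF : F →ₗ[ℤ] F)
      (c • AddMonoidAlgebra.coeff p)) = _
    rw [LinearMap.map_smul]; rfl

lemma coeff_d0lin (δF : Derivation ℤ F F) (p : MvPolynomial ℕ F) (μ : ℕ →₀ ℕ) :
    coeff μ (d0lin δF p) = δF (coeff μ p) := rfl

lemma d0lin_leibniz (δF : Derivation ℤ F F) (p q : MvPolynomial ℕ F) :
    d0lin δF (p * q) = p * d0lin δF q + q * d0lin δF p := by
  apply MvPolynomial.ext
  intro μ
  rw [coeff_d0lin, coeff_add, coeff_mul, coeff_mul, coeff_mul, map_sum]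
  have h2 : ∑ x ∈ Finset.HasAntidiagonal.antidiagonal μ, coeff x.1 q * coeff x.2 (d0lin δF p)
      = ∑ x ∈ Finset.HasAntidiagonal.antidiagonal μ, coeff x.2 q * coeff x.1 (d0lin δF p) := by
    conv_lhs => rw [← Finset.HasAntidiagonal.map_swap_antidiagonal]
    rw [Finset.sum_map]
    rfl
  rw [h2, ← Finset.sum_add_distrib]
  refine Finset.sum_congr rfl fun x _ => ?_
  rw [coeff_d0lin, coeff_d0lin, Derivation.leibniz, smul_eq_mul, smul_eq_mul]

/-- coefficientwise application of δF, as a derivation. -/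
noncomputable def d0 (δF : Derivation ℤ F F) :
    Derivation ℤ (MvPolynomial ℕ F) (MvPolynomial ℕ F) where
  toLinearMap := d0lin δF
  map_one_eq_zero' := by
    apply MvPolynomial.ext
    intro μ
    show coeff μ (d0lin δF 1) = coeff μ 0
    rw [coeff_d0lin, coeff_one, coeff_zero]
    split_ifs <;> simp
  leibniz' p q := by
    show d0lin δF (p * q) = p • d0lin δF q + q • d0lin δF p
    rw [smul_eq_mul, smul_eq_mul, d0lin_leibniz]

lemma d0_apply (δF : Derivation ℤ F F) (p : MvPolynomial ℕ F) : d0 δF p = d0lin δF p := rfl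

noncomputable def d1 : Derivation ℤ (MvPolynomial ℕ F) (MvPolynomial ℕ F) :=
  Derivation.restrictScalars ℤ (mkDerivation F fun k => X (k + 1))

/-- The derivation `d` on `F{u}` extending `δF` with `d u_k = u_{k+1}`. -/
noncomputable def dd (δF : Derivation ℤ F F) :
    Derivation ℤ (MvPolynomial ℕ F) (MvPolynomial ℕ F) := d0 δF + d1

@[simp] lemma dd_C (δF : Derivation ℤ F F) (a : F) : dd δF (C a) = C (δF a) := by
  have h0 : d0 δF (C a) = C (δF a) := by
    apply MvPolynomial.ext
    intro μ
    rw [d0_apply, coeff_d0lin, coeff_C, coeff_C]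
    split_ifs <;> simp
  have h1 : d1 (C a) = 0 := by
    show Derivation.restrictScalars ℤ (mkDerivation F fun k => X (k + 1)) (C a) = 0
    have h : (C a : MvPolynomial ℕ F) = algebraMap F _ a := rfl
    rw [Derivation.restrictScalars_apply, h, Derivation.map_algebraMap]
  show d0 δF (C a) + d1 (C a) = C (δF a)
  rw [h0, h1, add_zero]

@[simp] lemma dd_X (δF : Derivation ℤ F F) (k : ℕ) : dd δF (X k) = X (k + 1) := by
  have h0 : d0 δF (X k) = 0 := by
    apply MvPolynomial.ext
    intro μ
    rw [d0_apply, coeff_d0lin, coeff_X', coeff_zero]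
    split_ifs <;> simp
  have h1 : d1 (X k : MvPolynomial ℕ F) = X (k + 1) := by
    show Derivation.restrictScalars ℤ (mkDerivation F fun k => X (k + 1)) (X k) = X (k + 1)
    rw [Derivation.restrictScalars_apply, mkDerivation_X]
  show d0 δF (X k) + d1 (X k) = X (k + 1)
  rw [h0, h1, zero_add]


variable {F : Type*} [Field F] {E : Type*} [Field E] [Algebra F E]


lemma eval_dd (δF : Derivation ℤ F F) (D : Derivation ℤ E E)
    (hD : ∀ a : F, D (algebraMap F E a) = algebraMap F E (δF a)) (u : E)
    (p : MvPolynomial ℕ F) :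
    aeval (fun k => (⇑D)^[k] u) (dd δF p) = D (aeval (fun k => (⇑D)^[k] u) p) := by
  induction p using MvPolynomial.induction_on with
  | C a =>
      rw [dd_C, aeval_C, aeval_C, hD]
  | add p q hp hq =>
      rw [map_add, map_add, map_add, map_add, hp, hq]
  | mul_X p k hp =>
      rw [Derivation.leibniz, smul_eq_mul, smul_eq_mul, dd_X, map_add, map_mul, map_mul,
        map_mul, aeval_X, aeval_X, Derivation.leibniz, smul_eq_mul, smul_eq_mul, hp,
        Function.iterate_succ_apply' D k u]

lemma dd_supported (δF : Derivation ℤ F F) (n : ℕ) (p : MvPolynomial ℕ F)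
    (hp : p ∈ supported F {k | k ≤ n}) :
    pderiv n p ∈ supported F {k | k ≤ n} ∧
      ∃ r ∈ supported F {k | k ≤ n}, dd δF p = pderiv n p * X (n + 1) + r := by
  rw [supported_eq_adjoin_X] at hp
  induction hp using Algebra.adjoin_induction with
  | mem x hx =>
      obtain ⟨k, hk, rfl⟩ := hx
      have hk' : k ≤ n := hk
      constructor
      · rw [pderiv_X, Pi.single_apply]
        split_ifs with h
        · exact Subalgebra.one_mem _
        · exact Subalgebra.zero_mem _
      · rcases eq_or_ne k n with rfl | hkn
        · refine ⟨0, Subalgebra.zero_mem _, ?_⟩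
          rw [dd_X, pderiv_X, Pi.single_apply, if_pos rfl, one_mul, add_zero]
        · refine ⟨X (k + 1), ?_, ?_⟩
          · apply X_mem_supported.2
            show k + 1 ≤ n
            omega
          · rw [dd_X, pderiv_X, Pi.single_apply, if_neg hkn, zero_mul, zero_add]
  | algebraMap a =>
      have h1 : (algebraMap F (MvPolynomial ℕ F) a) = C a := rfl
      constructor
      · rw [h1, pderiv_C]; exact Subalgebra.zero_mem _
      · refine ⟨C (δF a), ?_, ?_⟩
        · apply Subalgebra.algebraMap_mem
        · rw [h1, dd_C, pderiv_C, zero_mul, zero_add]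
  | add x y hx hy ihx ihy =>
      obtain ⟨hx1, rx, hrx, hx2⟩ := ihx
      obtain ⟨hy1, ry, hry, hy2⟩ := ihy
      refine ⟨by rw [map_add]; exact Subalgebra.add_mem _ hx1 hy1, rx + ry,
        Subalgebra.add_mem _ hrx hry, ?_⟩
      rw [map_add, hx2, hy2, map_add]
      ring
  | mul x y hx hy ihx ihy =>
      obtain ⟨hx1, rx, hrx, hx2⟩ := ihx
      obtain ⟨hy1, ry, hry, hy2⟩ := ihy
      have hxs : x ∈ supported F {k | k ≤ n} := by rw [supported_eq_adjoin_X]; exact hx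
      have hys : y ∈ supported F {k | k ≤ n} := by rw [supported_eq_adjoin_X]; exact hy
      constructor
      · rw [pderiv_mul]
        exact Subalgebra.add_mem _ (Subalgebra.mul_mem _ hx1 hys) (Subalgebra.mul_mem _ hxs hy1)
      · refine ⟨rx * y + x * ry, Subalgebra.add_mem _ (Subalgebra.mul_mem _ hrx hys)
          (Subalgebra.mul_mem _ hxs hry), ?_⟩
        rw [Derivation.leibniz, smul_eq_mul, smul_eq_mul, hx2, hy2, pderiv_mul]
        ring

lemma dd_mem_supported (δF : Derivation ℤ F F) (n : ℕ) (p : MvPolynomial ℕ F)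
    (hp : p ∈ supported F {k | k ≤ n}) :
    dd δF p ∈ supported F {k | k ≤ n + 1} := by
  obtain ⟨h1, r, hr, h2⟩ := dd_supported δF n p hp
  rw [h2]
  have hmono : supported F {k | k ≤ n} ≤ supported F {k | k ≤ n + 1} :=
    supported_mono (fun k (hk : k ≤ n) => by show k ≤ n + 1; omega)
  exact Subalgebra.add_mem _
    (Subalgebra.mul_mem _ (hmono h1) (X_mem_supported.2 (by show n + 1 ≤ n + 1; omega)))
    (hmono hr)



variable {F : Type*} [Field F]

def e0 : Option ℕ ≃ ℕ where
  toFun o := o.elim 0 (· + 1)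
  invFun n := match n with | 0 => none | (k + 1) => some k
  left_inv o := by cases o <;> rfl
  right_inv n := by cases n <;> rfl

def eV (v : ℕ) : ℕ ≃ Option ℕ := (Equiv.swap v 0).trans e0.symm

lemma eV_self (v : ℕ) : eV v v = none := by
  simp [eV, e0, Equiv.swap_apply_left]

lemma eV_eq_none_iff (v k : ℕ) : eV v k = none ↔ k = v := by
  constructor
  · intro h
    exact (eV v).injective (h.trans (eV_self v).symm)
  · rintro rfl; exact eV_self _

noncomputable def TT (v : ℕ) : MvPolynomial ℕ F ≃ₐ[F] Polynomial (MvPolynomial ℕ F) :=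
  (renameEquiv F (eV v)).trans (optionEquivLeft F ℕ)

lemma TT_C (v : ℕ) (a : F) : TT v (MvPolynomial.C a) = Polynomial.C (MvPolynomial.C a) := by
  simp only [TT, AlgEquiv.trans_apply, renameEquiv_apply, rename_C]
  exact optionEquivLeft_C F ℕ a

lemma TT_X_self (v : ℕ) : TT v (X v : MvPolynomial ℕ F) = Polynomial.X := by
  simp only [TT, AlgEquiv.trans_apply, renameEquiv_apply, rename_X, eV_self]
  exact optionEquivLeft_X_none F ℕ

lemma TT_X_ne (v k : ℕ) (h : k ≠ v) :
    ∃ j : ℕ, TT v (X k : MvPolynomial ℕ F) = Polynomial.C (X j) := by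
  obtain ⟨j, hj⟩ : ∃ j, eV v k = some j := by
    cases h' : eV v k with
    | none => exact absurd ((eV_eq_none_iff v k).1 h') h
    | some j => exact ⟨j, rfl⟩
  refine ⟨j, ?_⟩
  simp only [TT, AlgEquiv.trans_apply, renameEquiv_apply, rename_X, hj]
  exact optionEquivLeft_X_some F ℕ j

lemma TT_pderiv (v : ℕ) (p : MvPolynomial ℕ F) :
    TT v (pderiv v p) = Polynomial.derivative (TT v p) := by
  induction p using MvPolynomial.induction_on with
  | C a => rw [pderiv_C, map_zero, TT_C, Polynomial.derivative_C]
  | add p q hp hq => rw [map_add, map_add, map_add, Polynomial.derivative_add, hp, hq]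
  | mul_X p k hp =>
      rw [pderiv_mul, map_add, map_mul, map_mul, map_mul, Polynomial.derivative_mul, hp]
      rcases eq_or_ne k v with rfl | hkv
      · have hone : pderiv k (X k : MvPolynomial ℕ F) = 1 := by
          exact pderiv_X_self k
        rw [TT_X_self]
        rw [hone]
        rw [Polynomial.derivative_X, map_one, mul_one]
      · obtain ⟨j, hj⟩ := TT_X_ne (F := F) v k hkv
        have hzero : pderiv v (X k : MvPolynomial ℕ F) = 0 := by
          exact pderiv_X_of_ne hkv
        rw [hj, hzero, map_zero, mul_zero, Polynomial.derivative_C, mul_zero, add_zero]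

lemma TT_rename (v : ℕ) (c : MvPolynomial ℕ F) :
    TT v (rename (fun k => (eV v).symm (some k)) c) = Polynomial.C c := by
  induction c using MvPolynomial.induction_on with
  | C a => rw [rename_C, TT_C]
  | add p q hp hq => rw [map_add, map_add, hp, hq, map_add]
  | mul_X p k hp =>
      rw [map_mul, map_mul, rename_X, hp, map_mul]
      congr 1
      have hsome : eV v ((eV v).symm (some k)) = some k := Equiv.apply_symm_apply _ _
      simp only [TT, AlgEquiv.trans_apply, renameEquiv_apply, rename_X, hsome]
      exact optionEquivLeft_X_some F ℕ k

lemma not_mem_vars_of_natDegree_eq_zero (v : ℕ) (P : MvPolynomial ℕ F)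
    (h : (TT v P).natDegree = 0) : v ∉ P.vars := by
  have h1 : TT v P = Polynomial.C ((TT v P).coeff 0) :=
    Polynomial.eq_C_of_natDegree_eq_zero h
  have h2 : P = rename (fun k => (eV v).symm (some k)) ((TT v P).coeff 0) := by
    apply (TT v).injective
    rw [TT_rename]
    exact h1
  intro hv
  rw [h2] at hv
  have := vars_rename (fun k => (eV v).symm (some k)) ((TT v P).coeff 0) hv
  rw [Finset.mem_image] at this
  obtain ⟨k, _, hk⟩ := this
  have : (some k : Option ℕ) = none := by
    have := congrArg (eV v) hk
    rwa [Equiv.apply_symm_apply, eV_self] at this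
  exact Option.some_ne_none _ this

lemma keyNe [CharZero F] {P Q : MvPolynomial ℕ F} (hP : P ≠ 0) (hQ : Q ≠ 0)
    (hPQ : IsRelPrime P Q) {v : ℕ} (hv : v ∈ P.vars ∨ v ∈ Q.vars) :
    pderiv v P * Q - P * pderiv v Q ≠ 0 := by
  intro h0
  have hCh : CharZero (MvPolynomial ℕ F) :=
    charZero_of_injective_algebraMap (C_injective ℕ F)
  have h : Polynomial.derivative (TT v P) * TT v Q
      = TT v P * Polynomial.derivative (TT v Q) := by
    have := congrArg (TT (F := F) v) (sub_eq_zero.1 h0)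
    rwa [map_mul, map_mul, TT_pderiv, TT_pderiv] at this
  have hp : TT v P ≠ 0 := fun hh => hP ((map_eq_zero_iff _ (TT v).injective).1 hh)
  have hq : TT v Q ≠ 0 := fun hh => hQ ((map_eq_zero_iff _ (TT v).injective).1 hh)
  have hrel : IsRelPrime (TT v P) (TT v Q) := by
    intro d hd1 hd2
    have k1 : (TT v).symm d ∣ P := by
      have := map_dvd (TT v).symm.toAlgHom hd1
      simpa using this
    have k2 : (TT v).symm d ∣ Q := by
      have := map_dvd (TT v).symm.toAlgHom hd2
      simpa using this
    have hu := (hPQ k1 k2).map (TT v).toAlgHom.toRingHom.toMonoidHom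
    simpa using hu
  rcases hv with hv | hv
  · have h1 : (TT v P).natDegree ≠ 0 := fun hz =>
      not_mem_vars_of_natDegree_eq_zero v P hz hv
    have hd : Polynomial.derivative (TT v P) ≠ 0 := fun hz =>
      h1 (Polynomial.natDegree_eq_zero_of_derivative_eq_zero hz)
    have hdvd : TT v P ∣ Polynomial.derivative (TT v P) * TT v Q :=
      ⟨Polynomial.derivative (TT v Q), h⟩
    have := Polynomial.natDegree_le_of_dvd (hrel.dvd_of_dvd_mul_right hdvd) hd
    have := Polynomial.natDegree_derivative_lt h1
    omega
  · have h1 : (TT v Q).natDegree ≠ 0 := fun hz =>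
      not_mem_vars_of_natDegree_eq_zero v Q hz hv
    have hd : Polynomial.derivative (TT v Q) ≠ 0 := fun hz =>
      h1 (Polynomial.natDegree_eq_zero_of_derivative_eq_zero hz)
    have hdvd : TT v Q ∣ Polynomial.derivative (TT v Q) * TT v P :=
      ⟨Polynomial.derivative (TT v P), by linear_combination -h⟩
    have := Polynomial.natDegree_le_of_dvd (hrel.symm.dvd_of_dvd_mul_right hdvd) hd
    have := Polynomial.natDegree_derivative_lt h1
    omega


variable {F : Type*} [Field F] {E : Type*} [Field E]

lemma degreeOf_eq_zero_of_supported {A : MvPolynomial ℕ F} {n v : ℕ}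
    (hAs : A ∈ supported F {k | k ≤ n}) (hv : n < v) : degreeOf v A = 0 := by
  rw [degreeOf_eq_sup]
  refine Nat.le_zero.1 (Finset.sup_le fun μ hμ => ?_)
  by_contra hne
  have : v ∈ A.vars := (mem_vars v).2 ⟨μ, hμ, Finsupp.mem_support_iff.2 (by omega)⟩
  have := mem_supported.1 hAs this
  simp only [Set.mem_setOf_eq] at this
  omega

lemma exp_eq_zero_of_supported {A : MvPolynomial ℕ F} {n v : ℕ} {μ : ℕ →₀ ℕ}
    (hAs : A ∈ supported F {k | k ≤ n}) (hv : n < v) (hμ : μ ∈ A.support) : μ v = 0 := by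
  by_contra hne
  have : v ∈ A.vars := (mem_vars v).2 ⟨μ, hμ, Finsupp.mem_support_iff.2 hne⟩
  have := mem_supported.1 hAs this
  simp only [Set.mem_setOf_eq] at this
  omega

lemma ord_deg {n : ℕ} {A B : MvPolynomial ℕ F} (hA : A ≠ 0)
    (hAs : A ∈ supported F {k | k ≤ n}) (hBs : B ∈ supported F {k | k ≤ n}) :
    (A * X (n + 1) + B).vars.max = ((n + 1 : ℕ) : WithBot ℕ) ∧
      degreeOf (n + 1) (A * X (n + 1) + B) = 1 := by
  have hnn : n < n + 1 := Nat.lt_succ_self n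
  have degA0 : degreeOf (n + 1) A = 0 := degreeOf_eq_zero_of_supported hAs hnn
  have degB0 : degreeOf (n + 1) B = 0 := degreeOf_eq_zero_of_supported hBs hnn
  have dAX : degreeOf (n + 1) (A * X (n + 1)) = 1 := by
    have := (degreeOf_mul_X_eq_degreeOf_add_one_iff (n + 1) A).2 hA
    rw [degA0] at this
    exact this
  -- lower bound witness
  obtain ⟨μ₀, hμ₀⟩ := support_nonempty.2 hA
  set ν : ℕ →₀ ℕ := μ₀ + Finsupp.single (n + 1) 1 with hν
  have hν1 : ν (n + 1) = 1 := by
    rw [hν, Finsupp.add_apply, Finsupp.single_apply, if_pos rfl,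
      exp_eq_zero_of_supported hAs hnn hμ₀]
  have hcν : coeff ν (A * X (n + 1) + B) = coeff μ₀ A := by
    rw [coeff_add, coeff_mul_X]
    have : coeff ν B = 0 := by
      by_contra hne
      have hm : ν ∈ B.support := Finsupp.mem_support_iff.2 hne
      have := exp_eq_zero_of_supported hBs hnn hm
      omega
    rw [this, add_zero]
  have hνmem : ν ∈ (A * X (n + 1) + B).support := by
    rw [mem_support_iff, hcν]
    exact mem_support_iff.1 hμ₀
  have hdeg : degreeOf (n + 1) (A * X (n + 1) + B) = 1 := by
    have hle : degreeOf (n + 1) (A * X (n + 1) + B) ≤ 1 := by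
      refine le_trans (degreeOf_add_le _ _ _) ?_
      rw [dAX, degB0]
      omega
    have hge := monomial_le_degreeOf (n + 1) hνmem
    omega
  refine ⟨?_, hdeg⟩
  apply le_antisymm
  · apply Finset.max_le
    intro v hv
    have hsub := vars_add_subset (A * X (n + 1)) B hv
    rw [Finset.mem_union] at hsub
    have hvle : v ≤ n + 1 := by
      rcases hsub with h | h
      · have := vars_mul A (X (n + 1)) h
        rw [Finset.mem_union] at this
        rcases this with h' | h'
        · have := mem_supported.1 hAs h'
          simp only [Set.mem_setOf_eq] at this
          omega
        · rw [vars_X, Finset.mem_singleton] at h'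
          omega
      · have := mem_supported.1 hBs h
        simp only [Set.mem_setOf_eq] at this
        omega
    exact WithBot.coe_le_coe.mpr hvle
  · have : n + 1 ∈ (A * X (n + 1) + B).vars :=
      (mem_vars _).2 ⟨ν, hνmem, Finsupp.mem_support_iff.2 (by omega)⟩
    exact Finset.le_max this

lemma deriv_div_pow (D : Derivation ℤ E E) (a q : E) (hq : q ≠ 0) (n : ℕ) :
    D (a / q ^ (n + 1)) = (D a * q - (n + 1 : ℕ) * a * D q) / q ^ (n + 2) := by
  rw [Derivation.leibniz_div, Derivation.leibniz_pow]
  simp only [smul_eq_mul, nsmul_eq_mul, Nat.add_sub_cancel]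
  field_simp
  ring

end DFAux

namespace DiffCurve

variable (F : Type*) {E : Type*} [Field F] [Field E] [Algebra F E]

/-- `F⟨S⟩`: the intermediate field of `E/F` generated by all iterated derivatives of
elements of `S`. -/
def genDF (D : Derivation ℤ E E) (S : Set E) : IntermediateField F E :=
  IntermediateField.adjoin F {x | ∃ s ∈ S, ∃ k : ℕ, (⇑D)^[k] s = x}

/-- `u` is differentially transcendental over `F`. -/
def DiffTrans (D : Derivation ℤ E E) (u : E) : Prop :=
  AlgebraicIndependent F (fun k : ℕ => (⇑D)^[k] u)

/-- Evaluation of `P ∈ F{u}` at `v`: the `F`-algebra map sending `u_k ↦ D^k v`. -/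
def evalD (D : Derivation ℤ E E) (v : E) : MvPolynomial ℕ F →ₐ[F] E :=
  aeval fun k => (⇑D)^[k] v

/-- Evaluation of `A ∈ F{x,y}` at `(η₁, η₂)`: `x_k ↦ D^k η₁`, `y_k ↦ D^k η₂`. -/
def evalD2 (D : Derivation ℤ E E) (η₁ η₂ : E) : MvPolynomial (Fin 2 × ℕ) F →ₐ[F] E :=
  aeval fun p => (⇑D)^[p.2] (if p.1 = 0 then η₁ else η₂)

variable {F}

/-- The order of `P ∈ F{u}`: the largest `k` such that `u_k` occurs (`⊥` if none). -/
def ordU (P : MvPolynomial ℕ F) : WithBot ℕ := P.vars.max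

/-- `ord_x` (for `i = 0`) resp. `ord_y` (for `i = 1`) of `A ∈ F{x,y}`. -/
def ordIdx (i : Fin 2) (A : MvPolynomial (Fin 2 × ℕ) F) : WithBot ℕ :=
  ((A.vars.filter fun v => v.1 = i).image Prod.snd).max

/-- `ord(A) = max(ord_x A, ord_y A)`. -/
def ordXY (A : MvPolynomial (Fin 2 × ℕ) F) : WithBot ℕ :=
  max (ordIdx 0 A) (ordIdx 1 A)

/-- The separant of `A` w.r.t. `x`: `∂A/∂x_s` where `s = ord_x A` (junk value `1` if
`ord_x A = ⊥`). -/
def sepX (A : MvPolynomial (Fin 2 × ℕ) F) : MvPolynomial (Fin 2 × ℕ) F :=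
  WithBot.recBotCoe 1 (fun s => pderiv ((0 : Fin 2), s) A) (ordIdx 0 A)

/-- The differential ideal `[A]` generated by `A`, for a derivation `d`. -/
def diffIdeal {R : Type*} [CommRing R] (d : Derivation ℤ R R) (A : R) : Ideal R :=
  Ideal.span (Set.range fun k : ℕ => (⇑d)^[k] A)

/-- The general component `sat(A) = [A] : S_A^∞` (as a set). -/
def satSet (dxy : Derivation ℤ (MvPolynomial (Fin 2 × ℕ) F) (MvPolynomial (Fin 2 × ℕ) F))
    (A : MvPolynomial (Fin 2 × ℕ) F) : Set (MvPolynomial (Fin 2 × ℕ) F) :=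
  {f | ∃ m : ℕ, sepX A ^ m * f ∈ diffIdeal dxy A}

variable (F)

/-- `(u, P₁, Q₁, P₂, Q₂)` is a differential rational parametrization of the differential
curve `(C, A)`. -/
def IsParam (D : Derivation ℤ E E)
    (dxy : Derivation ℤ (MvPolynomial (Fin 2 × ℕ) F) (MvPolynomial (Fin 2 × ℕ) F))
    (A : MvPolynomial (Fin 2 × ℕ) F) (u : E) (P₁ Q₁ P₂ Q₂ : MvPolynomial ℕ F) : Prop :=
  DiffTrans F D u ∧
  P₁ ≠ 0 ∧ Q₁ ≠ 0 ∧ IsRelPrime P₁ Q₁ ∧ P₂ ≠ 0 ∧ Q₂ ≠ 0 ∧ IsRelPrime P₂ Q₂ ∧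
  ¬ (evalD F D u P₁ / evalD F D u Q₁ ∈ (algebraMap F E).range ∧
     evalD F D u P₂ / evalD F D u Q₂ ∈ (algebraMap F E).range) ∧
  {B : MvPolynomial (Fin 2 × ℕ) F |
      evalD2 F D (evalD F D u P₁ / evalD F D u Q₁) (evalD F D u P₂ / evalD F D u Q₂) B = 0}
    = satSet dxy A

/-- A proper differential rational parametrization: additionally
`F⟨η₁, η₂⟩ = F⟨u⟩`. -/
def IsProperParam (D : Derivation ℤ E E)
    (dxy : Derivation ℤ (MvPolynomial (Fin 2 × ℕ) F) (MvPolynomial (Fin 2 × ℕ) F))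
    (A : MvPolynomial (Fin 2 × ℕ) F) (u : E) (P₁ Q₁ P₂ Q₂ : MvPolynomial ℕ F) : Prop :=
  IsParam F D dxy A u P₁ Q₁ P₂ Q₂ ∧
  genDF F D {evalD F D u P₁ / evalD F D u Q₁, evalD F D u P₂ / evalD F D u Q₂}
    = genDF F D {u}

/-- The projection `F{x,y,u} → F{x,y}` sending `u_k ↦ 0` and keeping `x_k`, `y_k`. -/
def projXY : MvPolynomial (Fin 3 × ℕ) F →ₐ[F] MvPolynomial (Fin 2 × ℕ) F :=
  aeval fun p => if h : (p.1 : ℕ) < 2 then X ((⟨p.1, h⟩ : Fin 2), p.2) else 0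

/-- The `i`-th row polynomial of the differential resultant matrix:
`d^{m₂}f₁, …, f₁, d^{m₁}f₂, …, f₂` where `f₁ = x₀·Q₁ − P₁`, `f₂ = y₀·Q₂ − P₂`
in `F{x,y,u}`. -/
def resRow (dxyu : Derivation ℤ (MvPolynomial (Fin 3 × ℕ) F) (MvPolynomial (Fin 3 × ℕ) F))
    (P₁ Q₁ P₂ Q₂ : MvPolynomial ℕ F) (m₁ m₂ : ℕ) (i : ℕ) : MvPolynomial (Fin 3 × ℕ) F :=
  if i ≤ m₂ then
    (⇑dxyu)^[m₂ - i] (X ((0 : Fin 3), 0) * rename (fun k => ((2 : Fin 3), k)) Q₁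
      - rename (fun k => ((2 : Fin 3), k)) P₁)
  else
    (⇑dxyu)^[m₁ + m₂ + 1 - i] (X ((1 : Fin 3), 0) * rename (fun k => ((2 : Fin 3), k)) Q₂
      - rename (fun k => ((2 : Fin 3), k)) P₂)

/-- The differential resultant `δ-Res(f₁, f₂) ∈ F{x,y}`: the determinant of the
`(m₁+m₂+2) × (m₁+m₂+2)` matrix whose rows are the coefficient vectors of
`d^{m₂}f₁, …, f₁, d^{m₁}f₂, …, f₂` w.r.t. `u_{m₁+m₂}, …, u_1, u_0, 1`. -/
def deltaRes (dxyu : Derivation ℤ (MvPolynomial (Fin 3 × ℕ) F) (MvPolynomial (Fin 3 × ℕ) F))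
    (P₁ Q₁ P₂ Q₂ : MvPolynomial ℕ F) (m₁ m₂ : ℕ) : MvPolynomial (Fin 2 × ℕ) F :=
  Matrix.det (Matrix.of fun i j : Fin (m₁ + m₂ + 2) =>
    if (j : ℕ) ≤ m₁ + m₂ then
      projXY F (pderiv ((2 : Fin 3), m₁ + m₂ - (j : ℕ)) (resRow F dxyu P₁ Q₁ P₂ Q₂ m₁ m₂ i))
    else projXY F (resRow F dxyu P₁ Q₁ P₂ Q₂ m₁ m₂ i))

/-- A linear homogeneous differential polynomial `L = Σ_k a_k u_k` in `F{u}`. -/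
def IsLinHom {F : Type*} [Field F] (L : MvPolynomial ℕ F) : Prop :=
  ∀ m ∈ L.support, ∃ k : ℕ, m = Finsupp.single k 1


/-- derivatives of a reduced differential rational function
`P(u)/Q(u)`: `Q(u) ≠ 0` and `D^s(P(u)/Q(u)) = P_s(u)/Q(u)^{s+1}` with `P_s` of order
`m + s` and degree exactly `1` in `u_{m+s}`. -/
theorem derivative_of_reduced_fraction [CharZero F]
    (δF : Derivation ℤ F F) (D : Derivation ℤ E E)
    (hD : ∀ a : F, D (algebraMap F E a) = algebraMap F E (δF a))
    (u : E) (hu : DiffTrans F D u)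
    (P Q : MvPolynomial ℕ F) (hP : P ≠ 0) (hQ : Q ≠ 0) (hPQ : IsRelPrime P Q)
    (m : ℕ) (hm : max (ordU P) (ordU Q) = (m : WithBot ℕ)) :
    evalD F D u Q ≠ 0 ∧
    ∀ s : ℕ, 1 ≤ s → ∃ Ps : MvPolynomial ℕ F,
      ordU Ps = ((m + s : ℕ) : WithBot ℕ) ∧
      MvPolynomial.degreeOf (m + s) Ps = 1 ∧
      (⇑D)^[s] (evalD F D u P / evalD F D u Q)
        = evalD F D u Ps / (evalD F D u Q) ^ (s + 1) := by
  classical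
  have hinj : Function.Injective ⇑(evalD F D u) := hu
  have hQu : evalD F D u Q ≠ 0 := fun h => hQ (hinj (by rw [h, map_zero]))
  have hev_dd : ∀ p : MvPolynomial ℕ F,
      evalD F D u (DFAux.dd δF p) = D (evalD F D u p) :=
    fun p => DFAux.eval_dd δF D hD u p
  have hordP : ordU P ≤ (m : WithBot ℕ) := by rw [← hm]; exact le_max_left _ _
  have hordQ : ordU Q ≤ (m : WithBot ℕ) := by rw [← hm]; exact le_max_right _ _
  have hPsupp : P ∈ supported F {k | k ≤ m} := by
    rw [mem_supported]
    intro v hv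
    have h1 : (v : WithBot ℕ) ≤ (m : WithBot ℕ) := le_trans (Finset.le_max hv) hordP
    exact WithBot.coe_le_coe.1 h1
  have hQsupp : Q ∈ supported F {k | k ≤ m} := by
    rw [mem_supported]
    intro v hv
    have h1 : (v : WithBot ℕ) ≤ (m : WithBot ℕ) := le_trans (Finset.le_max hv) hordQ
    exact WithBot.coe_le_coe.1 h1
  have hmv : m ∈ P.vars ∨ m ∈ Q.vars := by
    rcases max_choice (ordU P) (ordU Q) with h | h
    · have h2 : ordU P = (m : WithBot ℕ) := by rw [← h]; exact hm
      exact Or.inl (Finset.mem_of_max h2)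
    · have h2 : ordU Q = (m : WithBot ℕ) := by rw [← h]; exact hm
      exact Or.inr (Finset.mem_of_max h2)
  refine ⟨hQu, ?_⟩
  have key : ∀ t : ℕ, ∃ A B : MvPolynomial ℕ F, A ≠ 0 ∧
      A ∈ supported F {k | k ≤ m + t} ∧ B ∈ supported F {k | k ≤ m + t} ∧
      (⇑D)^[t + 1] (evalD F D u P / evalD F D u Q) =
        evalD F D u (A * X (m + t + 1) + B) / (evalD F D u Q) ^ (t + 2) := by
    intro t
    induction t with
    | zero =>
        obtain ⟨hpdP, rP, hrP, hdP⟩ := DFAux.dd_supported δF m P hPsupp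
        obtain ⟨hpdQ, rQ, hrQ, hdQ⟩ := DFAux.dd_supported δF m Q hQsupp
        refine ⟨pderiv m P * Q - P * pderiv m Q, rP * Q - P * rQ,
          DFAux.keyNe hP hQ hPQ hmv, ?_, ?_, ?_⟩
        · exact sub_mem (mul_mem hpdP hQsupp) (mul_mem hPsupp hpdQ)
        · exact sub_mem (mul_mem hrP hQsupp) (mul_mem hPsupp hrQ)
        · have hpoly : (pderiv m P * Q - P * pderiv m Q) * X (m + 1) + (rP * Q - P * rQ)
              = DFAux.dd δF P * Q - P * DFAux.dd δF Q := by
            rw [hdP, hdQ]; ring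
          have h2 : evalD F D u
                ((pderiv m P * Q - P * pderiv m Q) * X (m + 1) + (rP * Q - P * rQ))
              = D (evalD F D u P) * evalD F D u Q
                - evalD F D u P * D (evalD F D u Q) := by
            rw [hpoly, map_sub, map_mul, map_mul, hev_dd, hev_dd]
          have h3 := DFAux.deriv_div_pow D (evalD F D u P) (evalD F D u Q) hQu 0
          rw [pow_one] at h3
          show D (evalD F D u P / evalD F D u Q) = _
          rw [h3, h2]
          norm_num
    | succ t ih =>
        obtain ⟨A, B, hA, hAs, hBs, hid⟩ := ih
        have hmono : supported F {k | k ≤ m + t} ≤ supported F {k | k ≤ m + t + 1} :=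
          supported_mono (fun k (hk : k ≤ m + t) => show k ≤ m + t + 1 by omega)
        have hmono0 : supported F {k | k ≤ m} ≤ supported F {k | k ≤ m + t + 1} :=
          supported_mono (fun k (hk : k ≤ m) => show k ≤ m + t + 1 by omega)
        have hmono1 : supported F {k | k ≤ m + 1} ≤ supported F {k | k ≤ m + t + 1} :=
          supported_mono (fun k (hk : k ≤ m + 1) => show k ≤ m + t + 1 by omega)
        have hXn : (X (m + t + 1) : MvPolynomial ℕ F) ∈ supported F {k | k ≤ m + t + 1} :=
          X_mem_supported.2 (by show m + t + 1 ≤ m + t + 1; omega)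
        have hddQ : DFAux.dd δF Q ∈ supported F {k | k ≤ m + 1} :=
          DFAux.dd_mem_supported δF m Q hQsupp
        refine ⟨A * Q,
          (DFAux.dd δF A * X (m + t + 1) + DFAux.dd δF B) * Q
            - ((t + 2 : ℕ) : MvPolynomial ℕ F)
              * ((A * X (m + t + 1) + B) * DFAux.dd δF Q),
          mul_ne_zero hA hQ, mul_mem (hmono hAs) (hmono0 hQsupp), ?_, ?_⟩
        · have m1 : DFAux.dd δF A ∈ supported F {k | k ≤ m + t + 1} :=
            DFAux.dd_mem_supported δF (m + t) A hAs
          have m2 : DFAux.dd δF B ∈ supported F {k | k ≤ m + t + 1} :=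
            DFAux.dd_mem_supported δF (m + t) B hBs
          have m3 : ((t + 2 : ℕ) : MvPolynomial ℕ F) ∈ supported F {k | k ≤ m + t + 1} :=
            Subalgebra.natCast_mem _ _
          exact sub_mem (mul_mem (add_mem (mul_mem m1 hXn) m2) (hmono0 hQsupp))
            (mul_mem m3 (mul_mem (add_mem (mul_mem (hmono hAs) hXn) (hmono hBs))
              (hmono1 hddQ)))
        · have hddPs : DFAux.dd δF (A * X (m + t + 1) + B)
              = DFAux.dd δF A * X (m + t + 1) + A * X (m + t + 1 + 1) + DFAux.dd δF B := by
            rw [map_add, Derivation.leibniz, smul_eq_mul, smul_eq_mul, DFAux.dd_X]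
            ring
          have hpoly : A * Q * X (m + (t + 1) + 1)
                + ((DFAux.dd δF A * X (m + t + 1) + DFAux.dd δF B) * Q
                  - ((t + 2 : ℕ) : MvPolynomial ℕ F)
                    * ((A * X (m + t + 1) + B) * DFAux.dd δF Q))
              = DFAux.dd δF (A * X (m + t + 1) + B) * Q
                - ((t + 2 : ℕ) : MvPolynomial ℕ F)
                  * ((A * X (m + t + 1) + B) * DFAux.dd δF Q) := by
            rw [hddPs]; ring
          rw [Function.iterate_succ_apply', hid,
            DFAux.deriv_div_pow D _ (evalD F D u Q) hQu (t + 1)]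
          congr 1
          rw [hpoly, map_sub, map_mul, map_mul, map_mul, hev_dd, hev_dd, map_natCast]
          push_cast
          ring_nf
  intro s hs
  obtain ⟨t, rfl⟩ : ∃ t, s = t + 1 := ⟨s - 1, by omega⟩
  obtain ⟨A, B, hA, hAs, hBs, hid⟩ := key t
  refine ⟨A * X (m + t + 1) + B, ?_, ?_, ?_⟩
  · exact (DFAux.ord_deg hA hAs hBs).1
  · exact (DFAux.ord_deg hA hAs hBs).2
  · exact hid

end DiffCurve
end
end

section
/- Let n ≥ 1 and a₀, …, a_{n−1} ∈ F, and suppose ξ₁, …, ξ_n ∈ E are linearly independent over C_E and satisfy D^n(ξ_j) + Σ_{i=0}^{n−1} a_i·D^i(ξ_j) = 0 for all j. Let n₁ ≥ 1, b₀, …, b_{n₁−1} ∈ E, and suppose η₁, …, η_{n₁} ∈ E are linearly independent over C_E, each η_j lies in the C_E-linear span of {ξ₁, …, ξ_n}, and D^{n₁}(η_j) + Σ_{i=0}^{n₁−1} b_i·D^i(η_j) = 0 for all j. Then the differential subfield F⟨{b₀, …, b_{n₁−1}}⟩ has finite transcendence degree over F. (This is the statement that the coefficients of a monic right divisor of a monic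 linear differential operator with coefficients in F lie in a finitely generated differentially algebraic extension of F.) -/
open MvPolynomial

noncomputable section

namespace DiffCurve

variable (F : Type*) {E : Type*} [Field F] [Field E] [Algebra F E]

variable {F}

variable (F)

/-! ### Auxiliary lemmas -/

section Aux

variable {F}

/-- Stability of `adjoin` under a derivation extending one on the base field. -/
theorem adjoin_deriv_stable (D : Derivation ℤ E E) (δF : Derivation ℤ F F)
    (hD : ∀ a : F, D (algebraMap F E a) = algebraMap F E (δF a))
    (S : Set E) (hS : ∀ s ∈ S, D s ∈ IntermediateField.adjoin F S) :
    ∀ x ∈ IntermediateField.adjoin F S, D x ∈ IntermediateField.adjoin F S := by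
  intro x hx
  induction hx using IntermediateField.adjoin_induction with
  | mem x hx => exact hS x hx
  | algebraMap x => rw [hD]; exact IntermediateField.algebraMap_mem _ _
  | add x y hx hy ihx ihy => rw [map_add]; exact add_mem ihx ihy
  | inv x hx ihx =>
      rw [Derivation.leibniz_inv, smul_eq_mul]
      exact mul_mem (neg_mem (pow_mem (inv_mem hx) 2)) ihx
  | mul x y hx hy ihx ihy =>
      rw [Derivation.leibniz, smul_eq_mul, smul_eq_mul]
      exact add_mem (mul_mem hx ihy) (mul_mem hy ihx)

theorem adjoin_deriv_stable_iter (D : Derivation ℤ E E)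
    (L : IntermediateField F E) (hstab : ∀ x ∈ L, D x ∈ L) :
    ∀ x ∈ L, ∀ k : ℕ, (⇑D)^[k] x ∈ L := by
  intro x hx k
  induction k with
  | zero => simpa using hx
  | succ k ih => rw [Function.iterate_succ_apply']; exact hstab _ ih

/-- Nonvanishing of the Wronskian of solutions of a linear ODE that are linearly
independent over constants. -/
theorem wronskian_det_ne_zero (D : Derivation ℤ E E)
    (n₁ : ℕ) (b : Fin n₁ → E) (η : Fin n₁ → E)
    (hηODE : ∀ j, (⇑D)^[n₁] (η j) + ∑ i : Fin n₁, b i * (⇑D)^[(i : ℕ)] (η j) = 0)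
    (hηind : ∀ c : Fin n₁ → E, (∀ i, D (c i) = 0) → ∑ i, c i * η i = 0 → ∀ i, c i = 0) :
    (Matrix.of fun i j : Fin n₁ => (⇑D)^[(i : ℕ)] (η j)).det ≠ 0 := by
  classical
  intro hdet
  set P : (Fin n₁ → E) → Prop :=
    fun c => ∀ i : Fin n₁, ∑ j, c j * (⇑D)^[(i : ℕ)] (η j) = 0 with hPdef
  obtain ⟨v, hv0, hvM⟩ := (Matrix.exists_mulVec_eq_zero_iff).2 hdet
  have hPv : P v := by
    intro i
    have h := congrFun hvM i
    simp only [Matrix.mulVec, dotProduct, Matrix.of_apply, Pi.zero_apply] at h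
    rw [← h]
    exact Finset.sum_congr rfl fun j _ => mul_comm _ _
  have hfull : ∀ c, P c → ∀ k : ℕ, k ≤ n₁ → ∑ j, c j * (⇑D)^[k] (η j) = 0 := by
    intro c hc k hk
    rcases lt_or_eq_of_le hk with hk' | rfl
    · exact hc ⟨k, hk'⟩
    · have hrw : ∀ j, (⇑D)^[k] (η j) = -∑ i : Fin k, b i * (⇑D)^[(i : ℕ)] (η j) := fun j =>
        eq_neg_of_add_eq_zero_left (hηODE j)
      calc ∑ j, c j * (⇑D)^[k] (η j)
          = ∑ j, ∑ i : Fin k, -(b i * (c j * (⇑D)^[(i : ℕ)] (η j))) :=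
            Finset.sum_congr rfl fun j _ => by
              rw [hrw j, mul_neg, Finset.mul_sum, ← Finset.sum_neg_distrib]
              exact Finset.sum_congr rfl fun i _ => by ring
        _ = ∑ i : Fin k, ∑ j, -(b i * (c j * (⇑D)^[(i : ℕ)] (η j))) := Finset.sum_comm
        _ = 0 := Finset.sum_eq_zero fun i _ => by
              rw [Finset.sum_neg_distrib, ← Finset.mul_sum, hc i, mul_zero, neg_zero]
  have hsmul : ∀ c (t : E), P c → P (fun j => t * c j) := by
    intro c t hc i
    rw [show ∑ j, t * c j * (⇑D)^[(i : ℕ)] (η j) = t * ∑ j, c j * (⇑D)^[(i : ℕ)] (η j) by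
      rw [Finset.mul_sum]; exact Finset.sum_congr rfl fun j _ => by ring, hc i, mul_zero]
  have hder : ∀ c, P c → P (fun j => D (c j)) := by
    intro c hc i
    have h1 : D (∑ j, c j * (⇑D)^[(i : ℕ)] (η j)) = 0 := by rw [hc i, map_zero]
    rw [map_sum] at h1
    simp only [Derivation.leibniz, smul_eq_mul] at h1
    rw [Finset.sum_add_distrib] at h1
    have h2 : ∑ j, c j * D ((⇑D)^[(i : ℕ)] (η j)) = 0 := by
      have := hfull c hc ((i : ℕ) + 1) i.2
      rw [← this]
      exact Finset.sum_congr rfl fun j _ => by rw [Function.iterate_succ_apply']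
    rw [h2, zero_add] at h1
    rw [← h1]
    exact Finset.sum_congr rfl fun j _ => by ring
  set Q : ℕ → Prop := fun k => ∃ c, P c ∧ c ≠ 0 ∧
    (Finset.univ.filter fun j => c j ≠ 0).card = k with hQdef
  have hQex : ∃ k, Q k := ⟨_, v, hPv, hv0, rfl⟩
  let k₀ := Nat.find hQex
  obtain ⟨c, hPc, hc0, hcard⟩ : Q k₀ := Nat.find_spec hQex
  obtain ⟨j₀, hj₀⟩ : ∃ j, c j ≠ 0 := by
    by_contra h
    push_neg at h
    exact hc0 (funext h)
  set c' : Fin n₁ → E := fun j => (c j₀)⁻¹ * c j with hc'def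
  have hPc' : P c' := hsmul c _ hPc
  have hc'j₀ : c' j₀ = 1 := inv_mul_cancel₀ hj₀
  have hsupp : ∀ j, c' j ≠ 0 ↔ c j ≠ 0 := by
    intro j
    simp [hc'def, mul_ne_zero_iff, inv_ne_zero hj₀, hj₀]
  set d : Fin n₁ → E := fun j => D (c' j) with hddef
  have hPd : P d := hder c' hPc'
  have hd0 : d = 0 := by
    by_contra hd
    have hsub : (Finset.univ.filter fun j => d j ≠ 0) ⊆
        (Finset.univ.filter fun j => c' j ≠ 0).erase j₀ := by
      intro j hj
      simp only [Finset.mem_filter, Finset.mem_univ, true_and] at hj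
      refine Finset.mem_erase.2 ⟨?_, ?_⟩
      · rintro rfl
        exact hj (by rw [hddef]; simp [hc'j₀])
      · simp only [Finset.mem_filter, Finset.mem_univ, true_and]
        intro hc'j
        exact hj (by rw [hddef]; simp [hc'j])
    have hlt : (Finset.univ.filter fun j => d j ≠ 0).card < k₀ := by
      calc (Finset.univ.filter fun j => d j ≠ 0).card
          ≤ ((Finset.univ.filter fun j => c' j ≠ 0).erase j₀).card := Finset.card_le_card hsub
        _ < (Finset.univ.filter fun j => c' j ≠ 0).card := by
            refine Finset.card_erase_lt_of_mem ?_
            simp [hc'j₀]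
        _ = k₀ := by
            rw [← hcard]
            congr 1
            ext j
            simp only [Finset.mem_filter, Finset.mem_univ, true_and]
            exact hsupp j
    exact Nat.find_min hQex hlt ⟨d, hPd, hd, rfl⟩
  have hconst : ∀ j, D (c' j) = 0 := fun j => congrFun hd0 j
  have hrow0 : ∑ j, c' j * η j = 0 := by
    have := hfull c' hPc' 0 (Nat.zero_le _)
    simpa using this
  have := hηind c' hconst hrow0 j₀
  rw [hc'j₀] at this
  exact one_ne_zero this

open Matrix in
/-- The coefficients of the ODE lie in any differential field containing the derivatives of
the solutions, by Cramer's rule. -/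
theorem coeffs_mem (D : Derivation ℤ E E)
    (n₁ : ℕ) (b : Fin n₁ → E) (η : Fin n₁ → E)
    (hηODE : ∀ j, (⇑D)^[n₁] (η j) + ∑ i : Fin n₁, b i * (⇑D)^[(i : ℕ)] (η j) = 0)
    (hdet : (Matrix.of fun i j : Fin n₁ => (⇑D)^[(i : ℕ)] (η j)).det ≠ 0)
    (L : IntermediateField F E)
    (hmem : ∀ j, ∀ k : ℕ, k ≤ n₁ → (⇑D)^[k] (η j) ∈ L) :
    ∀ i, b i ∈ L := by
  classical
  set A : Matrix (Fin n₁) (Fin n₁) E :=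
    Matrix.of fun j i : Fin n₁ => (⇑D)^[(i : ℕ)] (η j) with hAdef
  have hAT : A = (Matrix.of fun i j : Fin n₁ => (⇑D)^[(i : ℕ)] (η j))ᵀ := by
    ext j i
    rfl
  have hdetA : A.det ≠ 0 := by
    rw [hAT, Matrix.det_transpose]
    exact hdet
  set v : Fin n₁ → E := fun j => -((⇑D)^[n₁] (η j)) with hvdef
  set A' : Matrix (Fin n₁) (Fin n₁) L :=
    Matrix.of fun j i : Fin n₁ => (⟨(⇑D)^[(i : ℕ)] (η j), hmem j i (le_of_lt i.2)⟩ : L)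
    with hA'def
  set v' : Fin n₁ → L := fun j => (⟨-((⇑D)^[n₁] (η j)), neg_mem (hmem j n₁ le_rfl)⟩ : L)
    with hv'def
  have hmap : A'.map (algebraMap L E) = A := by
    ext j i
    rfl
  have hdetA' : A'.det ≠ 0 := by
    intro h
    apply hdetA
    rw [← hmap, show A'.map (algebraMap (↥L) E) = (algebraMap (↥L) E).mapMatrix A' from rfl,
      ← RingHom.map_det, h, map_zero]
  have hunit : IsUnit A'.det := isUnit_iff_ne_zero.2 hdetA'
  set b' : Fin n₁ → L := A'⁻¹ *ᵥ v' with hb'def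
  have key1 : A' *ᵥ b' = v' := by
    rw [hb'def, Matrix.mulVec_mulVec, Matrix.mul_nonsing_inv _ hunit, Matrix.one_mulVec]
  have key2 : A *ᵥ b = v := by
    funext j
    have h := hηODE j
    simp only [Matrix.mulVec, dotProduct, Matrix.of_apply, hAdef, hvdef]
    have : ∑ i : Fin n₁, (⇑D)^[(i : ℕ)] (η j) * b i
        = ∑ i : Fin n₁, b i * (⇑D)^[(i : ℕ)] (η j) :=
      Finset.sum_congr rfl fun i _ => mul_comm _ _
    rw [this]
    exact eq_neg_of_add_eq_zero_right h
  have key3 : A *ᵥ (fun i => ((b' i : E))) = v := by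
    funext j
    have h2 := congrArg (algebraMap L E) (congrFun key1 j)
    rw [show (A' *ᵥ b') j = (A' j) ⬝ᵥ b' from rfl, RingHom.map_dotProduct] at h2
    exact h2
  have hb : b = fun i => ((b' i : E)) := by
    have h := key2.trans key3.symm
    have h2 := congrArg (fun w => A⁻¹ *ᵥ w) h
    simpa only [Matrix.mulVec_mulVec, Matrix.nonsing_inv_mul _ (isUnit_iff_ne_zero.2 hdetA),
      Matrix.one_mulVec] using h2
  intro i
  rw [congrFun hb i]
  exact (b' i).2

/-- Any `aeval g r` with small total degree lies in the span of box monomials. -/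
theorem aeval_mem_span_boxMonomials {ι : Type*} [Fintype ι] (g : ι → E) (B : ℕ)
    (r : MvPolynomial ι F) (hr : r.totalDegree ≤ B) :
    (aeval g) r ∈ Submodule.span F
      (Set.range fun β : ι → Fin (B + 1) => ∏ j, g j ^ (β j : ℕ)) := by
  classical
  have hrw : (aeval g) r
      = ∑ d ∈ r.support, (coeff d r) • ∏ j, g j ^ d j := by
    rw [aeval_def, eval₂_eq]
    refine Finset.sum_congr rfl fun d hd => ?_
    rw [Algebra.smul_def]
    congr 1
    exact Finset.prod_subset (Finset.subset_univ _) fun j _ hj => by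
      rw [Finsupp.notMem_support_iff.1 hj, pow_zero]
  rw [hrw]
  refine Submodule.sum_mem _ fun d hd => Submodule.smul_mem _ _ (Submodule.subset_span ?_)
  have hdj : ∀ j, d j ≤ B := by
    intro j
    by_cases h : d j = 0
    · simp [h]
    · calc d j ≤ ∑ i ∈ d.support, d i :=
            Finset.single_le_sum (fun _ _ => Nat.zero_le _) (Finsupp.mem_support_iff.2 h)
        _ = d.sum fun _ e => e := rfl
        _ ≤ r.totalDegree := MvPolynomial.le_totalDegree hd
        _ ≤ B := hr
  exact ⟨fun j => ⟨d j, Nat.lt_succ_of_le (hdj j)⟩, rfl⟩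

/-- A field generated by `m` elements contains no `m + 1` algebraically independent
elements (by a counting argument). -/
theorem not_algebraicIndependent_of_mem_adjoin_range
    {ι : Type*} [Fintype ι] (g : ι → E) (m : ℕ) (hcard : Fintype.card ι = m)
    (y : Fin (m + 1) → E)
    (hy : ∀ i, y i ∈ IntermediateField.adjoin F (Set.range g)) :
    ¬ AlgebraicIndependent F y := by
  classical
  intro hind
  choose p q hpq using fun i => (IntermediateField.mem_adjoin_range_iff F g (y i)).1 (hy i)
  set p' : Fin (m + 1) → MvPolynomial ι F :=
    fun i => if (aeval g) (q i) = 0 then 0 else p i with hp'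
  set q' : Fin (m + 1) → MvPolynomial ι F :=
    fun i => if (aeval g) (q i) = 0 then 1 else q i with hq'
  have hQ : ∀ i, (aeval g) (q' i) ≠ 0 := by
    intro i
    by_cases h : (aeval g) (q i) = 0
    · simp [hq', h]
    · simpa [hq', h] using h
  have hPQ : ∀ i, y i * (aeval g) (q' i) = (aeval g) (p' i) := by
    intro i
    by_cases h : (aeval g) (q i) = 0
    · simp [hp', hq', h, hpq i]
    · simp only [hp', hq', if_neg h]
      rw [hpq i, div_mul_cancel₀ _ h]
  set D₀ : ℕ := max 1 (Finset.univ.sup fun i : Fin (m + 1) =>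
    max (p' i).totalDegree (q' i).totalDegree) with hD₀
  have hD₀p : ∀ i, (p' i).totalDegree ≤ D₀ := fun i =>
    le_max_of_le_right <| le_trans (le_max_left _ _) <| Finset.le_sup (f := fun i =>
      max (p' i).totalDegree (q' i).totalDegree) (Finset.mem_univ i)
  have hD₀q : ∀ i, (q' i).totalDegree ≤ D₀ := fun i =>
    le_max_of_le_right <| le_trans (le_max_right _ _) <| Finset.le_sup (f := fun i =>
      max (p' i).totalDegree (q' i).totalDegree) (Finset.mem_univ i)
  set K : ℕ := (m + 1) * D₀ with hK
  set e : ℕ := (K + 1) ^ m with he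
  have he1 : 1 ≤ e := Nat.one_le_pow _ _ (Nat.succ_pos _)
  set B : ℕ := K * e with hB
  set u : (Fin (m + 1) → Fin (e + 1)) → E :=
    fun α => ∏ i, (aeval g) (p' i) ^ (α i : ℕ) * (aeval g) (q' i) ^ (e - (α i : ℕ)) with hu
  set w : (ι → Fin (B + 1)) → E := fun β => ∏ j, g j ^ (β j : ℕ) with hw
  have humem : ∀ α, u α ∈ Submodule.span F (Set.range w) := by
    intro α
    have hrw : u α = (aeval g) (∏ i, (p' i) ^ (α i : ℕ) * (q' i) ^ (e - (α i : ℕ))) := by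
      rw [hu, map_prod]
      exact Finset.prod_congr rfl fun i _ => by rw [map_mul, map_pow, map_pow]
    rw [hrw, hw]
    refine aeval_mem_span_boxMonomials g B _ ?_
    calc (∏ i, (p' i) ^ (α i : ℕ) * (q' i) ^ (e - (α i : ℕ))).totalDegree
        ≤ ∑ i, ((p' i) ^ (α i : ℕ) * (q' i) ^ (e - (α i : ℕ))).totalDegree :=
          MvPolynomial.totalDegree_finset_prod _ _
      _ ≤ ∑ _i : Fin (m + 1), D₀ * e := by
          refine Finset.sum_le_sum fun i _ => ?_
          calc ((p' i) ^ (α i : ℕ) * (q' i) ^ (e - (α i : ℕ))).totalDegree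
              ≤ ((p' i) ^ (α i : ℕ)).totalDegree + ((q' i) ^ (e - (α i : ℕ))).totalDegree :=
                MvPolynomial.totalDegree_mul _ _
            _ ≤ (α i : ℕ) * D₀ + (e - (α i : ℕ)) * D₀ := by
                gcongr
                · exact (MvPolynomial.totalDegree_pow _ _).trans
                    (Nat.mul_le_mul_left _ (hD₀p i))
                · exact (MvPolynomial.totalDegree_pow _ _).trans
                    (Nat.mul_le_mul_left _ (hD₀q i))
            _ = ((α i : ℕ) + (e - (α i : ℕ))) * D₀ := (add_mul _ _ _).symm
            _ = D₀ * e := by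
                rw [Nat.add_sub_cancel' (Nat.lt_succ_iff.1 (α i).2), mul_comm]
      _ = B := by
          rw [Finset.sum_const, Finset.card_univ, Fintype.card_fin, smul_eq_mul, hB, hK]
          ring
  set c₀ : E := ∏ i, (aeval g) (q' i) ^ e with hc₀
  have hc₀0 : c₀ ≠ 0 := Finset.prod_ne_zero_iff.2 fun i _ => pow_ne_zero _ (hQ i)
  have huind : LinearIndependent F u := by
    have hueq : u = fun α => c₀ * (aeval y)
        (monomial (Finsupp.equivFunOnFinite.symm fun i => ((α i : ℕ))) (1 : F)) := by
      funext α
      rw [aeval_monomial, map_one, one_mul]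
      have hprod : (Finsupp.equivFunOnFinite.symm fun i => ((α i : ℕ))).prod
          (fun i k => y i ^ k) = ∏ i, y i ^ (α i : ℕ) := by
        rw [Finsupp.prod_pow]
        rfl
      rw [hprod, hu]
      calc ∏ i, (aeval g) (p' i) ^ (α i : ℕ) * (aeval g) (q' i) ^ (e - (α i : ℕ))
          = ∏ i, y i ^ (α i : ℕ) * (aeval g) (q' i) ^ e := by
            refine Finset.prod_congr rfl fun i _ => ?_
            rw [← hPQ i, mul_pow, mul_assoc, ← pow_add,
              Nat.add_sub_cancel' (Nat.lt_succ_iff.1 (α i).2)]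
        _ = (∏ i, y i ^ (α i : ℕ)) * c₀ := by rw [Finset.prod_mul_distrib, hc₀]
        _ = c₀ * ∏ i, y i ^ (α i : ℕ) := mul_comm _ _
    have hmono : LinearIndependent F
        (fun s : Fin (m + 1) →₀ ℕ => (aeval y) (monomial s (1 : F))) := by
      have hbasis := (MvPolynomial.basisMonomials (Fin (m + 1)) F).linearIndependent
      have hker : LinearMap.ker (aeval (R := F) y).toLinearMap = ⊥ :=
        LinearMap.ker_eq_bot_of_injective (algebraicIndependent_iff_injective_aeval.1 hind)
      have hmap := hbasis.map' (aeval y).toLinearMap hker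
      have heq : (⇑(aeval y).toLinearMap ∘ ⇑(MvPolynomial.basisMonomials (Fin (m + 1)) F))
          = fun s : Fin (m + 1) →₀ ℕ => (aeval y) (monomial s (1 : F)) := by
        funext s
        simp [MvPolynomial.coe_basisMonomials]
      rwa [heq] at hmap
    have hcomp : LinearIndependent F
        (fun α : Fin (m + 1) → Fin (e + 1) => (aeval y)
          (monomial (Finsupp.equivFunOnFinite.symm fun i => ((α i : ℕ))) (1 : F))) := by
      refine hmono.comp _ ?_
      intro α β hαβ
      have := Finsupp.equivFunOnFinite.symm.injective hαβ
      funext i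
      exact Fin.val_injective (congrFun this i)
    have hmul := hcomp.map' (LinearMap.mulLeft F c₀)
      (LinearMap.ker_eq_bot.2 (mul_right_injective₀ hc₀0))
    rw [hueq]
    exact hmul
  set T : Finset E := Finset.univ.image w with hT
  have hspanT : ∀ α, u α ∈ Submodule.span F (T : Set E) := by
    intro α
    have : (T : Set E) = Set.range w := by
      rw [hT, Finset.coe_image, Finset.coe_univ, Set.image_univ]
    rw [this]
    exact humem α
  haveI : Module.Finite F (Submodule.span F (T : Set E)) :=
    FiniteDimensional.span_of_finite F (T.finite_toSet)
  set u' : (Fin (m + 1) → Fin (e + 1)) → Submodule.span F (T : Set E) :=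
    fun α => ⟨u α, hspanT α⟩ with hu'
  have hu'ind : LinearIndependent F u' :=
    huind.of_comp (Submodule.span F (T : Set E)).subtype
  have hcardle : Fintype.card (Fin (m + 1) → Fin (e + 1))
      ≤ Module.finrank F (Submodule.span F (T : Set E)) :=
    hu'ind.fintype_card_le_finrank
  have hrank : Module.finrank F (Submodule.span F (T : Set E)) ≤ (B + 1) ^ m := by
    calc Module.finrank F (Submodule.span F (T : Set E))
        ≤ T.card := finrank_span_finset_le_card T
      _ ≤ Fintype.card (ι → Fin (B + 1)) := Finset.card_image_le.trans (le_of_eq (by simp))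
      _ = (B + 1) ^ m := by rw [Fintype.card_fun, Fintype.card_fin, hcard]
  have hcount : Fintype.card (Fin (m + 1) → Fin (e + 1)) = (e + 1) ^ (m + 1) := by
    rw [Fintype.card_fun, Fintype.card_fin, Fintype.card_fin]
  have hfinal : (e + 1) ^ (m + 1) ≤ (B + 1) ^ m := by
    rw [← hcount]
    exact hcardle.trans hrank
  have hBe : B + 1 ≤ (K + 1) * e := by
    rw [hB]
    calc K * e + 1 ≤ K * e + e := by omega
      _ = (K + 1) * e := by ring
  have hcontra : (e + 1) ^ (m + 1) ≤ e ^ (m + 1) := by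
    calc (e + 1) ^ (m + 1) ≤ (B + 1) ^ m := hfinal
      _ ≤ ((K + 1) * e) ^ m := Nat.pow_le_pow_left hBe m
      _ = (K + 1) ^ m * e ^ m := mul_pow _ _ _
      _ = e * e ^ m := by rw [he]
      _ = e ^ (m + 1) := (pow_succ' e m).symm
  exact absurd hcontra (not_le.2 (Nat.pow_lt_pow_left (Nat.lt_succ_self e) (Nat.succ_ne_zero m)))

/-- Transcendence bases can be reindexed along an equivalence. -/
theorem isTranscendenceBasis_comp_equiv {ι ι' R A : Type*} [CommRing R] [CommRing A]
    [Algebra R A] {x : ι → A} (h : IsTranscendenceBasis R x) (e : ι' ≃ ι) :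
    IsTranscendenceBasis R (x ∘ e) := by
  constructor
  · exact (algebraicIndependent_equiv e).2 h.1
  · intro s hs hsub
    have hr : Set.range (x ∘ e) = Set.range x := e.surjective.range_comp x
    rw [hr] at hsub ⊢
    exact h.2 s hs hsub

end Aux

/-- the coefficients of a monic right divisor of a monic linear ODE with
coefficients in `F` generate a differential subfield of finite transcendence degree
over `F` (expressed via the existence of a finite transcendence basis). -/
theorem right_divisor_coeffs_finite_trdeg [CharZero F]
    (δF : Derivation ℤ F F) (D : Derivation ℤ E E)
    (hD : ∀ a : F, D (algebraMap F E a) = algebraMap F E (δF a))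
    (n : ℕ) (hn : 1 ≤ n) (a : Fin n → F) (ξ : Fin n → E)
    (hξODE : ∀ j, (⇑D)^[n] (ξ j)
      + ∑ i : Fin n, algebraMap F E (a i) * (⇑D)^[(i : ℕ)] (ξ j) = 0)
    (hξind : ∀ c : Fin n → E, (∀ i, D (c i) = 0) → ∑ i, c i * ξ i = 0 → ∀ i, c i = 0)
    (n₁ : ℕ) (hn₁ : 1 ≤ n₁) (b : Fin n₁ → E) (η : Fin n₁ → E)
    (hηODE : ∀ j, (⇑D)^[n₁] (η j) + ∑ i : Fin n₁, b i * (⇑D)^[(i : ℕ)] (η j) = 0)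
    (hηind : ∀ c : Fin n₁ → E, (∀ i, D (c i) = 0) → ∑ i, c i * η i = 0 → ∀ i, c i = 0)
    (hspan : ∀ j, ∃ c : Fin n → E, (∀ i, D (c i) = 0) ∧ η j = ∑ i, c i * ξ i) :
    ∃ (N : ℕ) (x : Fin N → ↥(genDF F D {e | ∃ i, b i = e})),
      IsTranscendenceBasis F x := by
  classical
  choose cmat hcD hcsum using hspan
  set g : (Fin n × Fin n) ⊕ (Fin n₁ × Fin n) → E :=
    Sum.elim (fun p => (⇑D)^[(p.1 : ℕ)] (ξ p.2)) (fun p => cmat p.1 p.2) with hg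
  set L : IntermediateField F E := IntermediateField.adjoin F (Set.range g) with hLdef
  have hgenL : ∀ z ∈ Set.range g, z ∈ L := fun z hz => IntermediateField.subset_adjoin F _ hz
  have hξL : ∀ (k : Fin n) (i : Fin n), (⇑D)^[(k : ℕ)] (ξ i) ∈ L :=
    fun k i => hgenL _ ⟨Sum.inl (k, i), rfl⟩
  have hcL : ∀ (j : Fin n₁) (i : Fin n), cmat j i ∈ L :=
    fun j i => hgenL _ ⟨Sum.inr (j, i), rfl⟩
  have hξtop : ∀ i : Fin n, (⇑D)^[n] (ξ i) ∈ L := by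
    intro i
    rw [eq_neg_of_add_eq_zero_left (hξODE i)]
    exact neg_mem (sum_mem fun j _ =>
      mul_mem (IntermediateField.algebraMap_mem L (a j)) (hξL j i))
  have hstabgen : ∀ z ∈ Set.range g, D z ∈ L := by
    rintro z ⟨q, rfl⟩
    rcases q with p | p
    · show D ((⇑D)^[(p.1 : ℕ)] (ξ p.2)) ∈ L
      rw [← Function.iterate_succ_apply' D]
      by_cases h : (p.1 : ℕ) + 1 < n
      · exact hξL ⟨(p.1 : ℕ) + 1, h⟩ p.2
      · have hn' : (p.1 : ℕ) + 1 = n := by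
          have := p.1.2
          omega
        simp only [Nat.succ_eq_add_one, hn']
        exact hξtop p.2
    · show D (cmat p.1 p.2) ∈ L
      rw [hcD p.1 p.2]
      exact zero_mem L
  have hstab : ∀ z ∈ L, D z ∈ L := by
    rw [hLdef]
    exact adjoin_deriv_stable D δF hD _ hstabgen
  have hstabk : ∀ z ∈ L, ∀ k : ℕ, (⇑D)^[k] z ∈ L := adjoin_deriv_stable_iter D L hstab
  have hηL : ∀ j, η j ∈ L := by
    intro j
    rw [hcsum j]
    refine sum_mem fun i _ => mul_mem (hcL j i) ?_
    have := hξL ⟨0, Nat.lt_of_lt_of_le Nat.zero_lt_one hn⟩ i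
    simpa using this
  have hηk : ∀ j, ∀ k : ℕ, k ≤ n₁ → (⇑D)^[k] (η j) ∈ L :=
    fun j k _ => hstabk _ (hηL j) k
  have hdet := wronskian_det_ne_zero D n₁ b η hηODE hηind
  have hbL : ∀ i, b i ∈ L := coeffs_mem D n₁ b η hηODE hdet L hηk
  have hKL : genDF F D {e | ∃ i, b i = e} ≤ L := by
    rw [genDF]
    refine IntermediateField.adjoin_le_iff.2 ?_
    rintro x ⟨z, ⟨i, rfl⟩, k, rfl⟩
    exact hstabk _ (hbL i) k
  obtain ⟨Kf, hKfdef⟩ : ∃ Kf : IntermediateField F E,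
      Kf = genDF F D {e | ∃ i, b i = e} := ⟨_, rfl⟩
  rw [← hKfdef] at hKL ⊢
  have hinj : Function.Injective (algebraMap F ↥Kf) := (algebraMap F ↥Kf).injective
  obtain ⟨s, hs⟩ := exists_isTranscendenceBasis F ↥Kf
  have hvinj : Function.Injective (Kf.val) := fun x y hxy => Subtype.ext hxy
  have hsfin : s.Finite := by
    by_contra hinf
    have hnat := (show s.Infinite from hinf).natEmbedding
    set m := Fintype.card ((Fin n × Fin n) ⊕ (Fin n₁ × Fin n)) with hm
    let emb : Fin (m + 1) ↪ s := ⟨fun i => hnat (i : ℕ), fun i j hij =>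
      Fin.val_injective (hnat.injective hij)⟩
    have h1 : AlgebraicIndependent F (((↑) : s → ↥Kf) ∘ emb) :=
      hs.1.comp emb emb.injective
    have h2 : AlgebraicIndependent F (⇑Kf.val ∘ (((↑) : s → ↥Kf) ∘ emb)) :=
      h1.map' (f := Kf.val) hvinj
    refine not_algebraicIndependent_of_mem_adjoin_range g m rfl
      (⇑Kf.val ∘ (((↑) : s → ↥Kf) ∘ emb)) (fun i => ?_) h2
    exact hKL ((emb i : ↥Kf)).2
  haveI := hsfin.fintype
  refine ⟨Fintype.card s, fun i => ((Fintype.equivFin s).symm i : ↥Kf), ?_⟩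
  exact isTranscendenceBasis_comp_equiv hs (Fintype.equivFin s).symm

end DiffCurve
end
end

section
/- Let A ∈ F{x,y} be irreducible with ord_x(A) = 0 and ord_y(A) = 0 (so A is an irreducible ordinary polynomial in the variables x₀, y₀, both of which occur). If the differential curve (C,A) is unirational, i.e. it admits a differential rational parametrization, then the plane algebraic curve A = 0 is rational over F: there exist rational functions R₁, R₂ in the field F(t) of rational functions in one variable over F, not both constant, such that evaluating A (viewed as a polynomial in x₀ and y₀) at (R₁, R₂) gives 0. -/
open MvPolynomial

noncomputable section

namespace DiffCurveAux

variable {F : Type*} [Field F]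

private lemma exists_eval_ne_zero' [Infinite F] {σ : Type*} {p : MvPolynomial σ F}
    (hp : p ≠ 0) : ∃ x : σ → F, eval x p ≠ 0 := by
  by_contra h
  push_neg at h
  exact hp (MvPolynomial.funext fun x => by simp [h x])

private lemma eval_line (α β : ℕ → F) (r : MvPolynomial ℕ F) (x : F) :
    Polynomial.eval x (eval₂ Polynomial.C
        (fun k => Polynomial.C (α k) + Polynomial.C (β k - α k) * Polynomial.X) r)
      = eval (fun k => α k + (β k - α k) * x) r := by
  have h := eval₂_comp_left (Polynomial.evalRingHom x) Polynomial.C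
    (fun k => Polynomial.C (α k) + Polynomial.C (β k - α k) * Polynomial.X) r
  rw [show ((Polynomial.evalRingHom x).comp (Polynomial.C : F →+* Polynomial F))
      = RingHom.id F by ext a; simp] at h
  rw [show ((Polynomial.evalRingHom x) ∘ fun k =>
      Polynomial.C (α k) + Polynomial.C (β k - α k) * Polynomial.X)
      = fun k => α k + (β k - α k) * x by funext k; simp] at h
  simpa [eval₂_id] using h

private lemma mk'_lift {K : Type*} [Field K] (q : MvPolynomial ℕ F)
    (φ : MvPolynomial ℕ F →+* K) (hφ : IsUnit (φ q)) (a : MvPolynomial ℕ F) :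
    IsLocalization.Away.lift (S := Localization.Away q) q hφ
        (IsLocalization.mk' (Localization.Away q) a
          (⟨q, Submonoid.mem_powers q⟩ : Submonoid.powers q))
      = φ a / φ q := by
  have h := IsLocalization.mk'_spec (Localization.Away q) a
    (⟨q, Submonoid.mem_powers q⟩ : Submonoid.powers q)
  have h2 := congrArg (IsLocalization.Away.lift (S := Localization.Away q) q hφ) h
  rw [map_mul, IsLocalization.Away.lift_eq, IsLocalization.Away.lift_eq] at h2
  rw [eq_div_iff hφ.ne_zero]
  exact h2

private lemma lift_injective {K : Type*} [Field K] (q : MvPolynomial ℕ F)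
    (φ : MvPolynomial ℕ F →+* K) (hinj : Function.Injective φ) (hφ : IsUnit (φ q)) :
    Function.Injective (IsLocalization.Away.lift (S := Localization.Away q) q hφ) := by
  intro a b hab
  rw [← sub_eq_zero]
  have h0 : IsLocalization.Away.lift (S := Localization.Away q) q hφ (a - b) = 0 := by
    rw [map_sub, hab, sub_self]
  obtain ⟨⟨r, s⟩, hrs⟩ := IsLocalization.surj (M := Submonoid.powers q) (a - b)
  have hs : IsUnit ((algebraMap (MvPolynomial ℕ F) (Localization.Away q)) (s : MvPolynomial ℕ F)) :=
    IsLocalization.map_units _ s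
  have hφr : φ r = 0 := by
    have h3 := congrArg (IsLocalization.Away.lift (S := Localization.Away q) q hφ) hrs
    rw [map_mul, h0, zero_mul, IsLocalization.Away.lift_eq] at h3
    exact h3.symm
  have hr : r = 0 := hinj (by rw [hφr, map_zero])
  rw [hr, map_zero] at hrs
  rw [mul_comm] at hrs
  exact (IsUnit.mul_right_eq_zero hs).mp hrs

private lemma phi_ne_zero {E : Type*} [Field E] [Algebra F E] [Infinite F]
    (j : MvPolynomial ℕ F →ₐ[F] E) (hj : Function.Injective j)
    (p q : MvPolynomial ℕ F) (hq : q ≠ 0)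
    (hpq : j p / j q ∉ (algebraMap F E).range) :
    rename Sum.inl p * rename Sum.inr q - rename Sum.inl q * rename Sum.inr p
      ≠ (0 : MvPolynomial (ℕ ⊕ ℕ) F) := by
  intro hΦ
  obtain ⟨b, hb⟩ := exists_eval_ne_zero' hq
  have hEq : rename Sum.inl p * rename Sum.inr q = rename Sum.inl q * rename Sum.inr p :=
    sub_eq_zero.mp hΦ
  have h1 : p * MvPolynomial.C (eval b q) = q * MvPolynomial.C (eval b p) := by
    have h := congrArg (eval₂Hom (MvPolynomial.C : F →+* MvPolynomial ℕ F)
        (Sum.elim X (fun k => MvPolynomial.C (b k)))) hEq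
    have hren : ∀ r : MvPolynomial ℕ F,
        eval₂Hom (MvPolynomial.C : F →+* MvPolynomial ℕ F)
          (Sum.elim X (fun k => MvPolynomial.C (b k))) (rename Sum.inl r) = r := by
      intro r
      rw [coe_eval₂Hom, eval₂_rename]
      simp [eval₂_eta]
    have hren2 : ∀ r : MvPolynomial ℕ F,
        eval₂Hom (MvPolynomial.C : F →+* MvPolynomial ℕ F)
          (Sum.elim X (fun k => MvPolynomial.C (b k))) (rename Sum.inr r)
        = MvPolynomial.C (eval b r) := by
      intro r
      rw [coe_eval₂Hom, eval₂_rename]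
      have h4 := eval₂_comp_left (MvPolynomial.C : F →+* MvPolynomial ℕ F)
        (RingHom.id F) b r
      rw [eval₂_id] at h4
      rw [h4]
      rfl
    rw [map_mul, map_mul, hren p, hren q, hren2 p, hren2 q] at h
    exact h
  have hjq : (j q : E) ≠ 0 := fun h => hq (hj (by rw [h, map_zero]))
  have hbq : algebraMap F E (eval b q) ≠ 0 :=
    fun h => hb ((algebraMap F E).injective (by rw [h, map_zero]))
  apply hpq
  refine ⟨eval b p / eval b q, ?_⟩
  have h2 := congrArg j h1
  rw [map_mul, map_mul] at h2
  have hC : ∀ c : F, j (MvPolynomial.C c) = algebraMap F E c := by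
    intro c
    rw [← MvPolynomial.algebraMap_eq]
    exact j.commutes c
  rw [hC, hC] at h2
  rw [map_div₀]
  rw [div_eq_div_iff hbq hjq]
  rw [mul_comm (algebraMap F E (eval b p)) (j q)]
  exact h2.symm

private lemma transfer {K : Type*} [Field K]
    (P₁ Q₁ P₂ Q₂ : MvPolynomial ℕ F)
    (A : MvPolynomial (Fin 2 × ℕ) F)
    (φ : MvPolynomial ℕ F →+* K) (hq1 : φ Q₁ ≠ 0) (hq2 : φ Q₂ ≠ 0)
    (hu : IsUnit (φ (Q₁ * Q₂))) :
    IsLocalization.Away.lift (S := Localization.Away (Q₁ * Q₂)) (Q₁ * Q₂) hu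
      (eval₂ ((algebraMap (MvPolynomial ℕ F) (Localization.Away (Q₁ * Q₂))).comp
          (MvPolynomial.C : F →+* MvPolynomial ℕ F))
        (fun p : Fin 2 × ℕ => if p.2 = 0 then
          (if p.1 = 0 then IsLocalization.mk' (Localization.Away (Q₁ * Q₂)) (P₁ * Q₂)
              (⟨Q₁ * Q₂, Submonoid.mem_powers _⟩ : Submonoid.powers (Q₁ * Q₂))
            else IsLocalization.mk' (Localization.Away (Q₁ * Q₂)) (P₂ * Q₁)
              (⟨Q₁ * Q₂, Submonoid.mem_powers _⟩ : Submonoid.powers (Q₁ * Q₂)))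
          else 0) A)
      = eval₂ (φ.comp (MvPolynomial.C : F →+* MvPolynomial ℕ F))
        (fun p : Fin 2 × ℕ => if p.2 = 0 then
          (if p.1 = 0 then φ P₁ / φ Q₁ else φ P₂ / φ Q₂) else 0) A := by
  rw [eval₂_comp_left (IsLocalization.Away.lift (S := Localization.Away (Q₁ * Q₂)) (Q₁ * Q₂) hu)]
  congr 1
  · rw [← RingHom.comp_assoc, IsLocalization.Away.lift_comp]
  · funext p
    by_cases h2 : p.2 = 0
    · by_cases h1 : p.1 = 0
      · simp only [Function.comp_apply, h2, h1, if_true]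
        rw [mk'_lift]
        rw [map_mul, map_mul]
        field_simp
      · simp only [Function.comp_apply, h2, h1, if_true, if_false]
        rw [mk'_lift]
        rw [map_mul, map_mul]
        field_simp
    · simp only [Function.comp_apply, h2, if_false, map_zero]


private lemma key {F : Type*} {E : Type*} [Field F] [CharZero F] [Field E] [Algebra F E]
    (j : MvPolynomial ℕ F →ₐ[F] E) (hj : Function.Injective j)
    (P₁ Q₁ P₂ Q₂ : MvPolynomial ℕ F) (hQ₁ : Q₁ ≠ 0) (hQ₂ : Q₂ ≠ 0)
    (A : MvPolynomial (Fin 2 × ℕ) F)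
    (hA0 : eval₂ (algebraMap F E)
        (fun p : Fin 2 × ℕ => if p.2 = 0 then
          (if p.1 = 0 then j P₁ / j Q₁ else j P₂ / j Q₂) else 0) A = 0)
    (hnc : ¬(j P₁ / j Q₁ ∈ (algebraMap F E).range ∧ j P₂ / j Q₂ ∈ (algebraMap F E).range)) :
    ∃ R₁ R₂ : RatFunc F,
      ¬((∃ c : F, R₁ = RatFunc.C c) ∧ (∃ c : F, R₂ = RatFunc.C c)) ∧
      MvPolynomial.eval₂ (RatFunc.C : F →+* RatFunc F)
        (fun p : Fin 2 × ℕ => if p.2 = 0 then (if p.1 = 0 then R₁ else R₂) else 0) A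
        = 0 := by
  classical
  set Pf : Fin 2 → MvPolynomial ℕ F := ![P₁, P₂] with hPf
  set Qf : Fin 2 → MvPolynomial ℕ F := ![Q₁, Q₂] with hQf
  obtain ⟨i, hi⟩ : ∃ i : Fin 2, j (Pf i) / j (Qf i) ∉ (algebraMap F E).range := by
    rcases not_and_or.mp hnc with h | h
    · exact ⟨0, by simpa [hPf, hQf] using h⟩
    · exact ⟨1, by simpa [hPf, hQf] using h⟩
  have hQfi : Qf i ≠ 0 := by fin_cases i <;> simpa [hQf]
  have hΦ := phi_ne_zero j hj (Pf i) (Qf i) hQfi hi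
  have hΨ : (rename Sum.inl (Q₁ * Q₂) * rename Sum.inr (Q₁ * Q₂) *
      (rename Sum.inl (Pf i) * rename Sum.inr (Qf i)
        - rename Sum.inl (Qf i) * rename Sum.inr (Pf i))
      : MvPolynomial (ℕ ⊕ ℕ) F) ≠ 0 := by
    refine mul_ne_zero (mul_ne_zero ?_ ?_) hΦ
    · exact (map_ne_zero_iff _ (rename_injective _ Sum.inl_injective)).mpr
        (mul_ne_zero hQ₁ hQ₂)
    · exact (map_ne_zero_iff _ (rename_injective _ Sum.inr_injective)).mpr
        (mul_ne_zero hQ₁ hQ₂)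
  obtain ⟨a, ha⟩ := exists_eval_ne_zero' hΨ
  simp only [map_mul, map_sub, eval_rename] at ha
  set α : ℕ → F := a ∘ Sum.inl with hα
  set β : ℕ → F := a ∘ Sum.inr with hβ
  obtain ⟨hαβ, hW⟩ := mul_ne_zero_iff.mp ha
  obtain ⟨hαQ, hβQ⟩ := mul_ne_zero_iff.mp hαβ
  -- the specialization
  set σp : MvPolynomial ℕ F →+* Polynomial F :=
    eval₂Hom Polynomial.C
      (fun k => Polynomial.C (α k) + Polynomial.C (β k - α k) * Polynomial.X) with hσp
  have hσ0 : ∀ r, Polynomial.eval 0 (σp r) = eval α r := by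
    intro r
    rw [hσp, coe_eval₂Hom, eval_line]
    rw [show (fun k => α k + (β k - α k) * 0) = α by funext k; ring]
  have hσ1 : ∀ r, Polynomial.eval 1 (σp r) = eval β r := by
    intro r
    rw [hσp, coe_eval₂Hom, eval_line]
    rw [show (fun k => α k + (β k - α k) * 1) = β by funext k; ring]
  set σ' : MvPolynomial ℕ F →+* RatFunc F :=
    (algebraMap (Polynomial F) (RatFunc F)).comp σp with hσ'
  have halg_inj : Function.Injective (algebraMap (Polynomial F) (RatFunc F)) :=
    IsFractionRing.injective _ _
  have hσpq : σp (Q₁ * Q₂) ≠ 0 := by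
    intro h
    apply hαQ
    have h6 := hσ0 (Q₁ * Q₂)
    rw [h, Polynomial.eval_zero, map_mul] at h6
    exact h6.symm
  have hσ'q : σ' (Q₁ * Q₂) ≠ 0 := fun h =>
    hσpq (halg_inj (by rw [map_zero]; exact h))
  have hσ'q1 : σ' Q₁ ≠ 0 := by
    intro h; apply hσ'q; rw [map_mul, h, zero_mul]
  have hσ'q2 : σ' Q₂ ≠ 0 := by
    intro h; apply hσ'q; rw [map_mul, h, mul_zero]
  -- E side
  have hjq1 : (j Q₁ : E) ≠ 0 := fun h => hQ₁ (hj (by rw [h, map_zero]))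
  have hjq2 : (j Q₂ : E) ≠ 0 := fun h => hQ₂ (hj (by rw [h, map_zero]))
  have huE : IsUnit (j.toRingHom (Q₁ * Q₂)) :=
    isUnit_iff_ne_zero.mpr (by
      show j (Q₁ * Q₂) ≠ 0
      rw [map_mul]; exact mul_ne_zero hjq1 hjq2)
  have hEv := transfer P₁ Q₁ P₂ Q₂ A j.toRingHom hjq1 hjq2 huE
  have hcomp : j.toRingHom.comp (MvPolynomial.C : F →+* MvPolynomial ℕ F)
      = algebraMap F E := by
    ext c
    show j (MvPolynomial.C c) = algebraMap F E c
    rw [← MvPolynomial.algebraMap_eq]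
    exact j.commutes c
  rw [hcomp] at hEv
  -- RatFunc side
  have huR : IsUnit (σ' (Q₁ * Q₂)) := isUnit_iff_ne_zero.mpr hσ'q
  have hRv := transfer P₁ Q₁ P₂ Q₂ A σ' hσ'q1 hσ'q2 huR
  set v : Localization.Away (Q₁ * Q₂) :=
    eval₂ ((algebraMap (MvPolynomial ℕ F) (Localization.Away (Q₁ * Q₂))).comp
        (MvPolynomial.C : F →+* MvPolynomial ℕ F))
      (fun p : Fin 2 × ℕ => if p.2 = 0 then
        (if p.1 = 0 then IsLocalization.mk' (Localization.Away (Q₁ * Q₂)) (P₁ * Q₂)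
            (⟨Q₁ * Q₂, Submonoid.mem_powers _⟩ : Submonoid.powers (Q₁ * Q₂))
          else IsLocalization.mk' (Localization.Away (Q₁ * Q₂)) (P₂ * Q₁)
            (⟨Q₁ * Q₂, Submonoid.mem_powers _⟩ : Submonoid.powers (Q₁ * Q₂)))
        else 0) A with hvdef
  have hv0 : v = 0 := by
    apply lift_injective (Q₁ * Q₂) j.toRingHom hj huE
    rw [map_zero, hEv]
    exact hA0
  rw [hv0, map_zero] at hRv
  have hC' : σ'.comp (MvPolynomial.C : F →+* MvPolynomial ℕ F)
      = (RatFunc.C : F →+* RatFunc F) := by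
    ext c
    show algebraMap (Polynomial F) (RatFunc F) (σp (MvPolynomial.C c)) = RatFunc.C c
    rw [hσp]
    rw [eval₂Hom_C]
    exact RatFunc.algebraMap_C c
  rw [hC'] at hRv
  refine ⟨σ' P₁ / σ' Q₁, σ' P₂ / σ' Q₂, ?_, hRv.symm⟩
  rintro ⟨⟨c₁, hc₁⟩, ⟨c₂, hc₂⟩⟩
  obtain ⟨c, hc⟩ : ∃ c : F, σ' (Pf i) / σ' (Qf i) = RatFunc.C c := by
    fin_cases i
    · exact ⟨c₁, by simpa [hPf, hQf] using hc₁⟩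
    · exact ⟨c₂, by simpa [hPf, hQf] using hc₂⟩
  have hσQfi : σ' (Qf i) ≠ 0 := by fin_cases i <;> simpa [hQf]
  have hpoly : σp (Pf i) = Polynomial.C c * σp (Qf i) := by
    apply halg_inj
    rw [map_mul]
    have h5 := (div_eq_iff hσQfi).mp hc
    rw [← RatFunc.algebraMap_C c] at h5
    exact h5
  have e0 := congrArg (Polynomial.eval 0) hpoly
  have e1 := congrArg (Polynomial.eval 1) hpoly
  rw [Polynomial.eval_mul, Polynomial.eval_C, hσ0, hσ0] at e0
  rw [Polynomial.eval_mul, Polynomial.eval_C, hσ1, hσ1] at e1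
  apply hW
  rw [e0, e1]
  ring



end DiffCurveAux

namespace DiffCurve

variable (F : Type*) {E : Type*} [Field F] [Field E] [Algebra F E]

variable {F}

variable (F)

/-- if an algebraic curve (`ord_x A = ord_y A = 0`), viewed as a
differential curve, is differentially unirational, then the plane algebraic curve
`A = 0` is rational over `F`: it admits a nonconstant rational parametrization
`(R₁, R₂)` with coefficients in `F(t)`. -/
theorem algebraic_curve_rational_of_diff_unirational [CharZero F]
    (δF : Derivation ℤ F F) (D : Derivation ℤ E E)
    (hD : ∀ a : F, D (algebraMap F E a) = algebraMap F E (δF a))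
    (dxy : Derivation ℤ (MvPolynomial (Fin 2 × ℕ) F) (MvPolynomial (Fin 2 × ℕ) F))
    (hdxyC : ∀ a : F, dxy (C a) = C (δF a))
    (hdxyX : ∀ (i : Fin 2) (k : ℕ), dxy (X (i, k)) = X (i, k + 1))
    (A : MvPolynomial (Fin 2 × ℕ) F) (hA : Irreducible A)
    (h0 : ordIdx 0 A = (0 : WithBot ℕ)) (h1 : ordIdx 1 A = (0 : WithBot ℕ))
    (huni : ∃ (u : E) (P₁ Q₁ P₂ Q₂ : MvPolynomial ℕ F),
      IsParam F D dxy A u P₁ Q₁ P₂ Q₂) :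
    ∃ R₁ R₂ : RatFunc F,
      ¬((∃ c : F, R₁ = RatFunc.C c) ∧ (∃ c : F, R₂ = RatFunc.C c)) ∧
      MvPolynomial.eval₂ (RatFunc.C : F →+* RatFunc F)
        (fun p : Fin 2 × ℕ => if p.2 = 0 then (if p.1 = 0 then R₁ else R₂) else 0) A
        = 0 := by
  classical
  obtain ⟨u, P₁, Q₁, P₂, Q₂, ht, hP₁, hQ₁, hrp₁, hP₂, hQ₂, hrp₂, hnc, hsat⟩ := huni
  have hj : Function.Injective ⇑(evalD F D u) := ht
  have hAsat : A ∈ satSet dxy A := ⟨0, by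
    rw [pow_zero, one_mul]
    exact Ideal.subset_span ⟨0, by simp⟩⟩
  rw [Set.ext_iff] at hsat
  have hmem := (hsat A).mpr hAsat
  have hvars : ∀ p : Fin 2 × ℕ, p ∈ A.vars → p.2 = 0 := by
    rintro ⟨i, k⟩ hv
    have hcase : ordIdx i A = (0 : WithBot ℕ) := by
      fin_cases i
      · exact h0
      · exact h1
    have hk : (k : WithBot ℕ) ≤ (0 : WithBot ℕ) := by
      rw [← hcase]
      exact Finset.le_max (Finset.mem_image.mpr
        ⟨(i, k), Finset.mem_filter.mpr ⟨hv, rfl⟩, rfl⟩)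
    have hk2 : k ≤ 0 := by exact_mod_cast hk
    simpa using Nat.le_zero.mp hk2
  have hA0 : eval₂ (algebraMap F E)
      (fun p : Fin 2 × ℕ => if p.2 = 0 then
        (if p.1 = 0 then evalD F D u P₁ / evalD F D u Q₁
          else evalD F D u P₂ / evalD F D u Q₂)
        else 0) A = 0 := by
    rw [← hmem]
    show _ = evalD2 F D _ _ A
    unfold evalD2
    rw [aeval_def]
    apply eval₂_congr
    intro i c hic hco
    have hi2 : i.2 = 0 := hvars i ((mem_vars i).mpr ⟨c, mem_support_iff.mpr hco, hic⟩)
    rw [hi2]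
    simp
  exact DiffCurveAux.key (evalD F D u) hj P₁ Q₁ P₂ Q₂ hQ₁ hQ₂ A hA0 hnc
end DiffCurve
end
end
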